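/- Let V_{T₀} ∈ ℝ^{d×d} be symmetric positive definite with minimum eigenvalue λ_min(V_{T₀}) ≥ K. For each round t = T₀+1, …, T let S_t be a finite index set with |S_t| ≤ K and let x_{t,i} ∈ ℝ^d for i ∈ S_t satisfy ‖x_{t,i}‖₂ ≤ 1. Define V_t = V_{T₀} + ∑_{t'=T₀+1}^t ∑_{i ∈ S_{t'}} x_{t',i} x_{t',i}ᵀ. Then ∑_{t'=T₀+1}^{T} ∑_{i ∈ S_{t'}} ‖x_{t',i}‖²_{V_{t'-1}⁻¹} ≤ 2 log( det(V_T) / λ_min(V_{T₀})^d ). -/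

import Mathlib

/-!
Write `A_t = ∑_{i ∈ S_t} x_{t,i} x_{t,i}ᵀ`, so that `V_t = V_{t-1} + A_t` and the `t`-th summand is
`u_t = tr (V_{t-1}⁻¹ A_t)`. Conjugating by `V_{t-1}^{1/2}` and using `det (1 + M) ≥ 1 + tr M` for
positive semidefinite `M` gives `det V_t ≥ det V_{t-1} (1 + u_t)`. Since
`V_{t-1} ≥ V_{T₀} ≥ λ_min(V_{T₀}) ≥ K` in the Loewner order, every term of `u_t` is at most `1 / K`,
so `u_t ≤ 1` and hence `u_t ≤ 2 log (1 + u_t)`. The sum then telescopes to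
`2 log (det V_T / det V_{T₀})`, and `det V_{T₀} ≥ λ_min(V_{T₀})^d`.
-/

open Matrix

noncomputable def lambdaMin {d : ℕ} (A : Matrix (Fin d) (Fin d) ℝ)
    (hA : A.IsHermitian) : ℝ :=
  ⨅ i, hA.eigenvalues i

open Finset Real
open scoped MatrixOrder

theorem Finset.one_add_sum_le_prod_one_add {ι R : Type*} [CommRing R] [LinearOrder R]
    [IsStrictOrderedRing R] (s : Finset ι) {f : ι → R}
    (hf : ∀ i ∈ s, 0 ≤ f i) : 1 + ∑ i ∈ s, f i ≤ ∏ i ∈ s, (1 + f i) := by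
  classical
  induction s using Finset.induction_on with
  | empty => simp
  | insert a s ha ih =>
    rw [sum_insert ha, prod_insert ha]
    have hs := ih fun i hi => hf i (mem_insert_of_mem hi)
    have hsum : 0 ≤ ∑ i ∈ s, f i := sum_nonneg fun i hi => hf i (mem_insert_of_mem hi)
    have ha : 0 ≤ f a := hf a (mem_insert_self a s)
    nlinarith

theorem Finset.sum_Ioc_le_sub_of_le_sub_pred {G : Type*} [AddCommGroup G] [PartialOrder G]
    [IsOrderedAddMonoid G] {a b : ℕ} (hab : a ≤ b) {f g : ℕ → G}
    (h : ∀ t ∈ Ioc a b, f t ≤ g t - g (t - 1)) : ∑ t ∈ Ioc a b, f t ≤ g b - g a := by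
  induction b, hab using Nat.le_induction with
  | base => simp
  | succ b hab ih =>
    have hb := h (b + 1) (mem_Ioc.2 ⟨by omega, le_rfl⟩)
    rw [Nat.add_sub_cancel] at hb
    rw [sum_Ioc_succ_top hab, ← sub_add_sub_cancel (g (b + 1)) (g b), add_comm (g (b + 1) - g b)]
    exact add_le_add (ih fun t ht => h t (Ioc_subset_Ioc_right b.le_succ ht)) hb

namespace Matrix

variable {n : Type*} [Fintype n]

theorem trace_mul_vecMulVec_self {R : Type*} [CommSemiring R] (M : Matrix n n R) (x : n → R) :
    (M * vecMulVec x x).trace = x ⬝ᵥ M *ᵥ x := by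
  rw [mul_vecMulVec, trace_vecMulVec, dotProduct_comm]

variable [DecidableEq n]

theorem PosSemidef.one_add_trace_le_det_one_add {M : Matrix n n ℝ} (hM : M.PosSemidef) :
    1 + M.trace ≤ (1 + M).det := by
  have hH := hM.isHermitian
  set U : Matrix n n ℝ := (hH.eigenvectorUnitary : Matrix n n ℝ)
  have hUU : U * star U = 1 := Unitary.coe_mul_star_self _
  have hM_eq : M = U * diagonal hH.eigenvalues * star U := by simpa using hH.spectral_theorem
  have hdiag : 1 + M = U * diagonal (fun i => 1 + hH.eigenvalues i) * star U := by
    rw [← diagonal_add (fun _ => 1), diagonal_one, Matrix.mul_add, Matrix.add_mul, Matrix.mul_one,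
      hUU, ← hM_eq]
  have hdet : (1 + M).det = ∏ i, (1 + hH.eigenvalues i) := by
    rw [hdiag, det_mul, det_mul, mul_right_comm, ← det_mul, hUU, det_one, one_mul,
      det_diagonal]
  rw [hdet, hH.trace_eq_sum_eigenvalues]
  exact one_add_sum_le_prod_one_add _ fun i _ => hM.eigenvalues_nonneg i

theorem PosDef.det_mul_one_add_trace_inv_mul_le_det_add {W A : Matrix n n ℝ} (hW : W.PosDef)
    (hA : A.PosSemidef) : W.det * (1 + (W⁻¹ * A).trace) ≤ (W + A).det := by
  set S := CFC.sqrt W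
  have hS : S.PosSemidef := nonneg_iff_posSemidef.mp (CFC.sqrt_nonneg W)
  have hSS : S * S = W := CFC.sqrt_mul_sqrt_self W (nonneg_iff_posSemidef.mpr hW.posSemidef)
  have hSdet : IsUnit S.det := by
    refine isUnit_iff_ne_zero.2 fun h => hW.det_pos.ne' ?_
    rw [← hSS, det_mul, h, zero_mul]
  set M := S⁻¹ * A * S⁻¹
  have hM : M.PosSemidef := by
    have hST : Sᵀ = S := by simpa using hS.isHermitian.eq
    simpa [transpose_nonsing_inv, hST] using hA.mul_mul_conjTranspose_same S⁻¹
  have hWA : W + A = S * (1 + M) * S := by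
    simp only [M, Matrix.mul_add, Matrix.add_mul, Matrix.mul_one, hSS, ← Matrix.mul_assoc,
      mul_nonsing_inv _ hSdet, Matrix.one_mul]
    rw [Matrix.mul_assoc, nonsing_inv_mul _ hSdet, Matrix.mul_one]
  have htrace : (W⁻¹ * A).trace = M.trace := by
    rw [← hSS, mul_inv_rev, ← trace_mul_cycle]
  have hdet : (W + A).det = W.det * (1 + M).det := by
    rw [hWA, ← hSS, det_mul, det_mul, det_mul]
    ring
  rw [hdet, htrace]
  exact mul_le_mul_of_nonneg_left hM.one_add_trace_le_det_one_add hW.det_pos.le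

theorem PosDef.dotProduct_inv_mulVec_le {W : Matrix n n ℝ} (hW : W.PosDef) {c : ℝ} (hc : 0 < c)
    (hcW : c • 1 ≤ W) (x : n → ℝ) : x ⬝ᵥ W⁻¹ *ᵥ x ≤ (x ⬝ᵥ x) / c := by
  -- with `y = W⁻¹ x`, the form is `x ⬝ y = yᵀ W y ≥ c ‖y‖²`, while Cauchy–Schwarz bounds `(x ⬝ y)²`
  set y := W⁻¹ *ᵥ x
  have hWy : W *ᵥ y = x := by
    simp [y, mulVec_mulVec, mul_nonsing_inv _ (isUnit_iff_ne_zero.2 hW.det_pos.ne')]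
  have hquad : x ⬝ᵥ y = y ⬝ᵥ W *ᵥ y := by rw [← hWy, dotProduct_comm]
  have hlow : c * (y ⬝ᵥ y) ≤ y ⬝ᵥ W *ᵥ y := by
    have := (le_iff.mp hcW).dotProduct_mulVec_nonneg y
    simp only [star_trivial, sub_mulVec, smul_mulVec, one_mulVec, dotProduct_sub,
      dotProduct_smul, smul_eq_mul] at this
    linarith
  have hcs : (x ⬝ᵥ y) ^ 2 ≤ (x ⬝ᵥ x) * (y ⬝ᵥ y) := by
    simpa [dotProduct, sq] using sum_mul_sq_le_sq_mul_sq univ x y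
  have hxx : 0 ≤ x ⬝ᵥ x := by simpa using dotProduct_star_self_nonneg x
  have hyy : 0 ≤ y ⬝ᵥ y := by simpa using dotProduct_star_self_nonneg y
  rw [hquad] at hcs ⊢
  rw [le_div_iff₀ hc]
  rcases (hlow.trans' (by positivity)).eq_or_lt with hq | hq
  · rw [← hq, zero_mul]
    exact hxx
  · refine le_of_mul_le_mul_right ?_ hq
    nlinarith [mul_le_mul_of_nonneg_left hlow hxx]

theorem PosDef.sum_dotProduct_inv_mulVec_le_one {W : Matrix n n ℝ} (hW : W.PosDef) {c : ℝ}
    (hcW : c • 1 ≤ W) {ι : Type*} {s : Finset ι} (hs : (#s : ℝ) ≤ c) {x : ι → n → ℝ}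
    (hx : ∀ i ∈ s, x i ⬝ᵥ x i ≤ 1) : ∑ i ∈ s, x i ⬝ᵥ W⁻¹ *ᵥ x i ≤ 1 := by
  rcases s.eq_empty_or_nonempty with rfl | hne
  · simp
  have hc : 0 < c := (Nat.cast_pos.2 hne.card_pos).trans_le hs
  calc ∑ i ∈ s, x i ⬝ᵥ W⁻¹ *ᵥ x i ≤ ∑ _i ∈ s, 1 / c := sum_le_sum fun i hi =>
        (hW.dotProduct_inv_mulVec_le hc hcW (x i)).trans <|
          div_le_div_of_nonneg_right (hx i hi) hc.le
    _ = #s / c := by rw [sum_const, nsmul_eq_mul, mul_one_div]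
    _ ≤ 1 := (div_le_one hc).2 hs

theorem PosDef.sum_dotProduct_inv_mulVec_le_two_mul_log_det {W : Matrix n n ℝ} (hW : W.PosDef)
    {ι : Type*} (s : Finset ι) (x : ι → n → ℝ) (h : ∑ i ∈ s, x i ⬝ᵥ W⁻¹ *ᵥ x i ≤ 1) :
    ∑ i ∈ s, x i ⬝ᵥ W⁻¹ *ᵥ x i ≤
      2 * (log (W + ∑ i ∈ s, vecMulVec (x i) (x i)).det - log W.det) := by
  set u := ∑ i ∈ s, x i ⬝ᵥ W⁻¹ *ᵥ x i
  have hA : (∑ i ∈ s, vecMulVec (x i) (x i)).PosSemidef :=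
    posSemidef_sum s fun i _ => by simpa using posSemidef_vecMulVec_self_star (x i)
  have htrace : (W⁻¹ * ∑ i ∈ s, vecMulVec (x i) (x i)).trace = u := by
    rw [Matrix.mul_sum, trace_sum]
    exact sum_congr rfl fun i _ => trace_mul_vecMulVec_self _ _
  have hu : 0 ≤ u := sum_nonneg fun i _ => by
    simpa using hW.inv.posSemidef.dotProduct_mulVec_nonneg (x i)
  have hdet := hW.det_mul_one_add_trace_inv_mul_le_det_add hA
  rw [htrace] at hdet
  have hlog : log W.det + log (1 + u) ≤ log (W + ∑ i ∈ s, vecMulVec (x i) (x i)).det := by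
    rw [← log_mul hW.det_pos.ne' (by positivity)]
    exact log_le_log (by have := hW.det_pos; positivity) hdet
  have hhalf : u / 2 ≤ 2 * u / (u + 2) := by
    rw [div_le_div_iff₀ (by norm_num) (by positivity)]
    nlinarith
  linarith [le_log_one_add_of_nonneg hu]

end Matrix

theorem lambdaMin_smul_one_le {d : ℕ} (A : Matrix (Fin d) (Fin d) ℝ) (hA : A.IsHermitian) :
    lambdaMin A hA • (1 : Matrix (Fin d) (Fin d) ℝ) ≤ A := by
  rw [← Algebra.algebraMap_eq_smul_one, algebraMap_le_iff_le_spectrum hA.isSelfAdjoint,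
    hA.spectrum_real_eq_range_eigenvalues]
  rintro _ ⟨i, rfl⟩
  exact ciInf_le (Set.finite_range _).bddBelow i

/- For `d = 0` the infimum defining `lambdaMin` is the junk value `0`, but `0 ^ 0 = 1`. -/
theorem lambdaMin_pow_pos {d : ℕ} {A : Matrix (Fin d) (Fin d) ℝ} (hA : A.PosDef) :
    0 < lambdaMin A hA.isHermitian ^ d := by
  rcases d.eq_zero_or_pos with rfl | hd
  · simp
  have : Nonempty (Fin d) := Fin.pos_iff_nonempty.1 hd
  obtain ⟨i, hi⟩ := exists_eq_ciInf_of_finite (f := hA.isHermitian.eigenvalues)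
  exact pow_pos (by rw [lambdaMin, ← hi]; exact hA.eigenvalues_pos i) d

theorem lambdaMin_pow_le_det {d : ℕ} {A : Matrix (Fin d) (Fin d) ℝ} (hA : A.PosDef) :
    lambdaMin A hA.isHermitian ^ d ≤ A.det := by
  have hdet : A.det = ∏ i, hA.isHermitian.eigenvalues i := by
    simpa using hA.isHermitian.det_eq_prod_eigenvalues
  rw [hdet, ← Fin.prod_const]
  exact prod_le_prod (fun _ _ => iInf_nonneg fun i => (hA.eigenvalues_pos i).le)
    fun i _ => ciInf_le (Set.finite_range _).bddBelow i

/-- Batched elliptical potential bound: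
`∑_{t'=T₀+1}^T ∑_{i∈S_{t'}} ‖x_{t',i}‖²_{V_{t'-1}⁻¹} ≤ 2 log(det(V_T)/λ_min(V_{T₀})^d)`. -/
theorem stmt5 {d K T₀ T : ℕ} {ι : Type*}
    (V₀ : Matrix (Fin d) (Fin d) ℝ) (hV₀ : V₀.PosDef)
    (hmin : (K : ℝ) ≤ lambdaMin V₀ hV₀.isHermitian)
    (S : ℕ → Finset ι) (x : ℕ → ι → Fin d → ℝ)
    (hcard : ∀ t ∈ Finset.Ioc T₀ T, (S t).card ≤ K)
    (hx : ∀ t ∈ Finset.Ioc T₀ T, ∀ i ∈ S t, Real.sqrt (∑ j, (x t i j) ^ 2) ≤ 1)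
    (V : ℕ → Matrix (Fin d) (Fin d) ℝ)
    (hV : ∀ t, V t = V₀ + ∑ t' ∈ Finset.Ioc T₀ t, ∑ i ∈ S t', vecMulVec (x t' i) (x t' i)) :
    ∑ t' ∈ Finset.Ioc T₀ T, ∑ i ∈ S t', x t' i ⬝ᵥ (V (t' - 1))⁻¹ *ᵥ x t' i
      ≤ 2 * Real.log ((V T).det / (lambdaMin V₀ hV₀.isHermitian) ^ d) := by
  have hgram : ∀ t, (∑ t' ∈ Ioc T₀ t, ∑ i ∈ S t', vecMulVec (x t' i) (x t' i)).PosSemidef :=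
    fun t => posSemidef_sum _ fun t' _ => posSemidef_sum _ fun i _ => by
      simpa using posSemidef_vecMulVec_self_star (x t' i)
  have hVpos : ∀ t, (V t).PosDef := fun t => hV t ▸ hV₀.add_posSemidef (hgram t)
  have hKV : ∀ t, (K : ℝ) • 1 ≤ V t := fun t => calc
    (K : ℝ) • 1 ≤ lambdaMin V₀ hV₀.isHermitian • 1 := smul_le_smul_of_nonneg_right hmin zero_le_one
    _ ≤ V₀ := lambdaMin_smul_one_le V₀ _
    _ ≤ V t := hV t ▸ le_add_of_nonneg_right (nonneg_iff_posSemidef.2 (hgram t))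
  have hstep : ∀ t ∈ Ioc T₀ T, ∑ i ∈ S t, x t i ⬝ᵥ (V (t - 1))⁻¹ *ᵥ x t i ≤
      2 * log (V t).det - 2 * log (V (t - 1)).det := by
    intro t ht
    obtain ⟨hT₀t, -⟩ := mem_Ioc.1 ht
    obtain ⟨s, rfl⟩ : ∃ s, t = s + 1 := ⟨t - 1, by omega⟩
    have hVs : V (s + 1) = V s + ∑ i ∈ S (s + 1), vecMulVec (x (s + 1) i) (x (s + 1) i) := by
      rw [hV, hV, sum_Ioc_succ_top (by omega), add_assoc]
    rw [hVs, Nat.add_sub_cancel, ← mul_sub]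
    refine (hVpos s).sum_dotProduct_inv_mulVec_le_two_mul_log_det _ _ ?_
    refine (hVpos s).sum_dotProduct_inv_mulVec_le_one (hKV s) (by exact_mod_cast hcard _ ht)
      fun i hi => ?_
    simpa [dotProduct, sq] using hx _ ht i hi
  have hsum : ∑ t' ∈ Ioc T₀ T, ∑ i ∈ S t', x t' i ⬝ᵥ (V (t' - 1))⁻¹ *ᵥ x t' i ≤
      2 * log (V T).det - 2 * log V₀.det := by
    rcases le_or_gt T₀ T with h | h
    · simpa [hV T₀] using sum_Ioc_le_sub_of_le_sub_pred h hstep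
    · simp [Ioc_eq_empty_of_le h.le, hV T]
  rw [log_div (hVpos T).det_pos.ne' (lambdaMin_pow_pos hV₀).ne']
  linarith [log_le_log (lambdaMin_pow_pos hV₀) (lambdaMin_pow_le_det hV₀)]
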